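/- For the map f : ℝ³ → ℝ⁴, f(y,z,t) = (2t + t³/3, y, z, t), at every point of its image the vector field ξ = (2/(√5(2+t²))) e₁ + (2t/(√5(2+t²))) e₂ + (t²/(√5(2+t²))) e₃ − (2/√5) e₄ is a unit vector orthogonal (with respect to g̃) to each of the three coordinate tangent vectors ∂f/∂y, ∂f/∂z, ∂f/∂t of the parametrized hypersurface; that is, ξ is a unit normal field along f. -/

import Mathlib

/-!
The frame `e₁, …, e₄` is `g̃`-orthonormal: with `E` the matrix whose rows are the `eᵢ`,
`E g̃ Eᵀ = 1`, so `g̃` is the Euclidean dot product of frame coordinates. In the frame,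
`ξ = (2, 2t, t², -2(2 + t²)) / (√5 (2 + t²))`, while `∂f/∂y = e₂ - t e₁`,
`∂f/∂z = e₃ - t e₂ + (t²/2) e₁` and `∂f/∂t = e₄ + (2 + t²) e₁`. The three dot products with `ξ`
vanish, and `|ξ|² = 1` is the identity `4 + 4t² + t⁴ + 4(2 + t²)² = 5(2 + t²)²`.
-/

noncomputable section

/-- The left-invariant frame fields e₁,e₂,e₃,e₄ on ℝ⁴ (coordinates x,y,z,t = p 0,...,p 3). -/
def eVF (i : Fin 4) (p : Fin 4 → ℝ) : Fin 4 → ℝ :=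
  ![![1, 0, 0, 0],
    ![p 3, 1, 0, 0],
    ![(p 3) ^ 2 / 2, p 3, 1, 0],
    ![0, 0, 0, 1]] i

/-- The matrix of the metric g̃ at a point with last coordinate t. -/
def gMat (t : ℝ) : Matrix (Fin 4) (Fin 4) ℝ :=
  !![1, -t, t ^ 2 / 2, 0;
     -t, 1 + t ^ 2, -t * (1 + t ^ 2 / 2), 0;
     t ^ 2 / 2, -t * (1 + t ^ 2 / 2), 1 + t ^ 2 + t ^ 4 / 4, 0;
     0, 0, 0, 1]

/-- The metric g̃ as a bilinear form on each tangent space. -/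
def gMet (p X Y : Fin 4 → ℝ) : ℝ :=
  ∑ i, ∑ j, gMat (p 3) i j * X i * Y j

/-- Partial derivative in direction of the i-th coordinate. -/
def pd (i : Fin 4) (f : (Fin 4 → ℝ) → ℝ) (p : Fin 4 → ℝ) : ℝ :=
  deriv (fun s => f (Function.update p i s)) (p i)

/-- The Christoffel symbols Γᵏᵢⱼ of g̃. -/
def Chr (p : Fin 4 → ℝ) (k i j : Fin 4) : ℝ :=
  (1 / 2) * ∑ l, (gMat (p 3))⁻¹ k l *
    (pd i (fun q => gMat (q 3) j l) p + pd j (fun q => gMat (q 3) i l) p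
      - pd l (fun q => gMat (q 3) i j) p)

/-- The Levi-Civita connection of g̃ in coordinates. -/
def nabla (X Y : (Fin 4 → ℝ) → (Fin 4 → ℝ)) (p : Fin 4 → ℝ) : Fin 4 → ℝ :=
  fun k => (∑ i, X p i * pd i (fun q => Y q k) p)
    + ∑ i, ∑ j, Chr p k i j * X p i * Y p j

/-- Lie bracket of vector fields on ℝ⁴. -/
def bracket (X Y : (Fin 4 → ℝ) → (Fin 4 → ℝ)) (p : Fin 4 → ℝ) : Fin 4 → ℝ :=
  fderiv ℝ Y p (X p) - fderiv ℝ X p (Y p)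

/-- The curvature tensor R̃(X,Y)Z = ∇̃_X ∇̃_Y Z − ∇̃_Y ∇̃_X Z − ∇̃_{[X,Y]} Z. -/
def Riem (X Y Z : (Fin 4 → ℝ) → (Fin 4 → ℝ)) (p : Fin 4 → ℝ) : Fin 4 → ℝ :=
  nabla X (nabla Y Z) p - nabla Y (nabla X Z) p - nabla (bracket X Y) Z p

/-- The parametrization f(y,z,t) = (2t + t³/3, y, z, t) of the example hypersurface. -/
def fex (u : Fin 3 → ℝ) : Fin 4 → ℝ :=
  ![2 * u 2 + (u 2) ^ 3 / 3, u 0, u 1, u 2]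

/-- The unit normal field of the example minimal hypersurface. -/
def ξex (p : Fin 4 → ℝ) : Fin 4 → ℝ :=
  (2 / (Real.sqrt 5 * (2 + (p 3) ^ 2))) • eVF 0 p
    + (2 * p 3 / (Real.sqrt 5 * (2 + (p 3) ^ 2))) • eVF 1 p
    + ((p 3) ^ 2 / (Real.sqrt 5 * (2 + (p 3) ^ 2))) • eVF 2 p
    - (2 / Real.sqrt 5) • eVF 3 p

open Matrix

def frameMat (p : Fin 4 → ℝ) : Matrix (Fin 4) (Fin 4) ℝ :=
  Matrix.of fun i => eVF i p

lemma gMet_eq_dotProduct_mulVec (p X Y : Fin 4 → ℝ) :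
    gMet p X Y = X ⬝ᵥ gMat (p 3) *ᵥ Y := by
  simp only [gMet, dotProduct, mulVec, Finset.mul_sum]
  exact Finset.sum_congr rfl fun i _ => Finset.sum_congr rfl fun j _ => by ring

lemma frameMat_mul_gMat_mul_transpose (p : Fin 4 → ℝ) :
    frameMat p * gMat (p 3) * (frameMat p)ᵀ = 1 := by
  ext i j
  fin_cases i <;> fin_cases j <;>
    simp only [frameMat, eVF, gMat, mul_apply, transpose_apply, of_apply, cons_val,
      Fin.sum_univ_four, Fin.reduceFinMk, one_apply_eq, one_apply_ne, ne_eq, Fin.reduceEq,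
      not_false_eq_true] <;> ring

lemma gMet_vecMul_frameMat (p a b : Fin 4 → ℝ) :
    gMet p (a ᵥ* frameMat p) (b ᵥ* frameMat p) = a ⬝ᵥ b := by
  rw [gMet_eq_dotProduct_mulVec, ← mulVec_transpose _ b, ← dotProduct_mulVec a, mulVec_mulVec,
    mulVec_mulVec, frameMat_mul_gMat_mul_transpose, one_mulVec]

lemma ξex_eq_vecMul_frameMat (p : Fin 4 → ℝ) :
    ξex p = ![2 / (√5 * (2 + p 3 ^ 2)), 2 * p 3 / (√5 * (2 + p 3 ^ 2)),
      p 3 ^ 2 / (√5 * (2 + p 3 ^ 2)), -(2 / √5)] ᵥ* frameMat p := by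
  ext k
  simp only [ξex, frameMat, vecMul, dotProduct, Fin.sum_univ_four, of_apply, cons_val,
    Pi.add_apply, Pi.sub_apply, Pi.smul_apply, smul_eq_mul]
  ring

open ContinuousLinearMap in
lemma hasFDerivAt_fex (u : Fin 3 → ℝ) :
    HasFDerivAt fex
      (pi ![(2 + u 2 ^ 2) • proj 2, proj (R := ℝ) (φ := fun _ : Fin 3 => ℝ) 0, proj 1, proj 2]) u := by
  rw [hasFDerivAt_pi]
  intro k
  fin_cases k
  · have ht := hasFDerivAt_apply (𝕜 := ℝ) 2 u
    convert (ht.const_mul 2).add ((ht.pow 3).const_mul (1 / 3)) using 1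
    · ext v
      simp only [fex, Fin.zero_eta, cons_val_zero, Pi.add_apply]
      ring
    · ext v
      simp only [Fin.zero_eta, cons_val_zero, _root_.add_apply, _root_.smul_apply, proj_apply,
        smul_eq_mul, nsmul_eq_mul]
      ring
  all_goals exact hasFDerivAt_apply _ u

lemma fderiv_fex_apply (u v : Fin 3 → ℝ) :
    fderiv ℝ fex u v = ![(2 + u 2 ^ 2) * v 2, v 0, v 1, v 2] := by
  rw [(hasFDerivAt_fex u).fderiv]
  ext k
  fin_cases k <;> simp

lemma fderiv_fex_single_eq_vecMul_frameMat (u : Fin 3 → ℝ) (i : Fin 3) :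
    fderiv ℝ fex u (Pi.single i 1) =
      ![![-u 2, 1, 0, 0], ![u 2 ^ 2 / 2, -u 2, 1, 0], ![2 + u 2 ^ 2, 0, 0, 1]] i ᵥ*
        frameMat (fex u) := by
  rw [fderiv_fex_apply]
  ext k
  fin_cases i <;> fin_cases k <;>
    simp only [fex, frameMat, eVF, vecMul, dotProduct, Fin.sum_univ_four, of_apply, cons_val,
      Fin.reduceFinMk, Pi.single_apply, Fin.reduceEq, if_true, if_false] <;> ring

/-- Along f, the field ξ has unit g̃-length and is g̃-orthogonal to the three
coordinate tangent vectors ∂f/∂y, ∂f/∂z, ∂f/∂t: it is a unit normal field. -/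
theorem nil4_example_unit_normal : ∀ u : Fin 3 → ℝ,
    gMet (fex u) (ξex (fex u)) (ξex (fex u)) = 1 ∧
    (∀ i : Fin 3,
      gMet (fex u) (fderiv ℝ fex u (Pi.single i 1)) (ξex (fex u)) = 0) := by
  intro u
  have h5 : √5 ^ 2 = 5 := Real.sq_sqrt (by norm_num)
  have ht : 2 + u 2 ^ 2 ≠ 0 := by positivity
  rw [ξex_eq_vecMul_frameMat]
  refine ⟨?_, fun i => ?_⟩
  · rw [gMet_vecMul_frameMat]
    simp only [dotProduct, Fin.sum_univ_four, fex, cons_val]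
    field_simp
    rw [h5]
    ring
  · rw [fderiv_fex_single_eq_vecMul_frameMat, gMet_vecMul_frameMat]
    fin_cases i <;> simp only [dotProduct, Fin.sum_univ_four, fex, cons_val, Fin.reduceFinMk] <;>
      field_simp <;> ring
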